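/- Let A → B be a finite étale morphism of k-algebras (k perfect of characteristic p > 0) and let N' be a finitely presented module over B' (B with k-structure twisted by Frobenius). Then the natural map N' ⊗_{A', F_A} A → N' ⊗_{B', F_B} B, n' ⊗ a ↦ n' ⊗ a, is an isomorphism of A-modules. Equivalently: for a finite étale ring map A → B and a finitely presented B-module N, base change of N along the Frobenius of A agrees with base change along the Frobenius of B. -/

import Mathlib

/-!
Write `A' = FrobAlg A p`, `B' = FrobAlg B p`. The relative Frobenius `π : A' ⊗_A B → B'`,
`a ⊗ b ↦ a b^p`, is an isomorphism for finite étale `A → B`. Its image contains every `b^p`, so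
over that image the diagonal ideal of `B ⊗ B` is generated by the nilpotents `1 ⊗ b - b ⊗ 1`; being
idempotent and finitely generated (unramifiedness) it vanishes, and a finite epimorphism is
surjective. Its kernel is nil since `z^p = 1 ⊗ π z`, and a surjection with nil kernel from an
unramified onto a smooth algebra is bijective: lift the identity, then use uniqueness of lifts.
Read as a `B`-linear isomorphism `B ⊗_A A' ≅ B'`, `π` gives
`N ⊗_A A' ≅ N ⊗_B (B ⊗_A A') ≅ N ⊗_B B'`.
-/

open TensorProduct

/-- `FrobAlg A p` is `A` viewed as an algebra over itself via Frobenius. -/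
def FrobAlg (A : Type*) [CommRing A] (p : ℕ) [Fact p.Prime] [CharP A p] : Type _ := A

namespace FrobAlg

variable (A : Type*) [CommRing A] (p : ℕ) [Fact p.Prime] [CharP A p]

instance : CommRing (FrobAlg A p) := inferInstanceAs (CommRing A)

noncomputable instance : Algebra A (FrobAlg A p) :=
  RingHom.toAlgebra (frobenius A p)

/-- The identity of `A`, viewed as a map `FrobAlg A p → A`. -/
def out (x : FrobAlg A p) : A := x

/-- The identity of `A`, viewed as a map `A → FrobAlg A p`. -/
def mk (x : A) : FrobAlg A p := x

end FrobAlg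

lemma CharP.of_ringHom_of_nontrivial {R S : Type*} [CommRing R] [CommRing S] [Nontrivial S]
    (f : R →+* S) (p : ℕ) [hp : Fact p.Prime] [CharP R p] : CharP S p :=
  (CharP.charP_iff_prime_eq_zero hp.out).mpr <| by
    rw [← map_natCast f, CharP.cast_eq_zero, map_zero]

lemma Ideal.eq_bot_of_isIdempotentElem_of_le_nilradical {R : Type*} [CommRing R] {I : Ideal R}
    (hfg : I.FG) (hI : IsIdempotentElem I) (hnil : I ≤ nilradical R) : I = ⊥ := by
  obtain ⟨n, hn⟩ := hfg.isNilpotent_iff_le_nilradical.mpr hnil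
  rw [← hI.pow_succ_eq n, pow_succ, hn, zero_mul, Ideal.zero_eq_bot]

lemma KaehlerDifferential.ideal_le_nilradical_of_pow_mem_range {R S : Type*} [CommRing R]
    [CommRing S] [Algebra R S] (p : ℕ) [Fact p.Prime] [CharP S p]
    (h : ∀ s : S, s ^ p ∈ (algebraMap R S).range) :
    KaehlerDifferential.ideal R S ≤ nilradical (S ⊗[R] S) := by
  rcases subsingleton_or_nontrivial (S ⊗[R] S) with _ | _
  · intro x _
    exact ⟨0, Subsingleton.elim _ _⟩
  have := CharP.of_ringHom_of_nontrivial
    (Algebra.TensorProduct.includeLeftRingHom (R := R) (A := S) (B := S)) p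
  rw [← KaehlerDifferential.span_range_eq_ideal, Ideal.span_le]
  rintro _ ⟨s, rfl⟩
  obtain ⟨r, hr⟩ := h s
  refine mem_nilradical.mpr ⟨p, ?_⟩
  rw [sub_pow_char, Algebra.TensorProduct.tmul_pow, Algebra.TensorProduct.tmul_pow, one_pow, ← hr,
    Algebra.TensorProduct.tmul_one_eq_one_tmul, sub_self]

lemma surjective_algebraMap_of_pow_mem_range {R S : Type*} [CommRing R] [CommRing S] [Algebra R S]
    [Algebra.FormallyUnramified R S] [Module.Finite R S] (p : ℕ) [Fact p.Prime] [CharP S p]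
    (h : ∀ s : S, s ^ p ∈ (algebraMap R S).range) : Function.Surjective (algebraMap R S) := by
  have hbot : KaehlerDifferential.ideal R S = ⊥ :=
    Ideal.eq_bot_of_isIdempotentElem_of_le_nilradical (KaehlerDifferential.ideal_fg R S)
      ((Ideal.cotangent_subsingleton_iff _).mp (inferInstanceAs (Subsingleton Ω[S⁄R])))
      (KaehlerDifferential.ideal_le_nilradical_of_pow_mem_range p h)
  refine Algebra.isEpi_iff_surjective_algebraMap_of_finite.mp
    ((Algebra.isEpi_iff_forall_one_tmul_eq R S).mpr fun s => ?_)
  have := KaehlerDifferential.one_smul_sub_smul_one_mem_ideal R s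
  rwa [hbot, Ideal.mem_bot, sub_eq_zero] at this

lemma AlgHom.surjective_of_pow_mem_range {R S T : Type*} [CommRing R] [CommRing S] [CommRing T]
    [Algebra R S] [Algebra R T] [Algebra.FormallyUnramified R T] [Module.Finite R T]
    (p : ℕ) [Fact p.Prime] [CharP T p] (f : S →ₐ[R] T) (h : ∀ t : T, t ^ p ∈ f.range) :
    Function.Surjective f := by
  let _ : Algebra S T := f.toAlgebra
  have : IsScalarTower R S T := .of_algebraMap_eq fun r => (f.commutes r).symm
  have : Algebra.FormallyUnramified S T := .of_restrictScalars R S T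
  have : Module.Finite S T := .of_restrictScalars_finite R S T
  exact surjective_algebraMap_of_pow_mem_range p h

lemma AlgHom.bijective_of_surjective_of_ker_le_nilradical {R S T : Type*} [CommRing R]
    [CommRing S] [CommRing T] [Algebra R S] [Algebra R T] [Algebra.FormallySmooth R S]
    [Algebra.FinitePresentation R S] [Algebra.FormallyUnramified R T]
    [Algebra.FinitePresentation R T] (q : T →ₐ[R] S) (hq : Function.Surjective q)
    (hker : RingHom.ker q ≤ nilradical T) : Function.Bijective q := by
  have hnil : IsNilpotent (RingHom.ker q) :=
    (Algebra.FinitePresentation.ker_fG_of_surjective q hq).isNilpotent_iff_le_nilradical.mpr hker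
  let σ := Algebra.FormallySmooth.liftOfSurjective (AlgHom.id R S) q hq hnil
  have hσq : σ.comp q = AlgHom.id R T :=
    Algebra.FormallyUnramified.ext' (q : T →+* S) hnil _ _ fun x => by simp [σ]
  exact ⟨Function.LeftInverse.injective (g := σ) (AlgHom.congr_fun hσq), hq⟩

namespace FrobAlg

variable (p : ℕ) [Fact p.Prime] (A B : Type*) [CommRing A] [CommRing B] [CharP A p] [CharP B p]
  [Algebra A B]

instance : CharP (FrobAlg B p) p := inferInstanceAs (CharP B p)

instance : Algebra (FrobAlg A p) (FrobAlg B p) := inferInstanceAs (Algebra A B)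

instance [Algebra.FormallyUnramified A B] :
    Algebra.FormallyUnramified (FrobAlg A p) (FrobAlg B p) :=
  inferInstanceAs (Algebra.FormallyUnramified A B)

instance [Algebra.FormallySmooth A B] : Algebra.FormallySmooth (FrobAlg A p) (FrobAlg B p) :=
  inferInstanceAs (Algebra.FormallySmooth A B)

instance [Algebra.FinitePresentation A B] :
    Algebra.FinitePresentation (FrobAlg A p) (FrobAlg B p) :=
  inferInstanceAs (Algebra.FinitePresentation A B)

instance [Module.Finite A B] : Module.Finite (FrobAlg A p) (FrobAlg B p) :=
  inferInstanceAs (Module.Finite A B)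

section RelativeFrobenius

noncomputable abbrev algebraBase : Algebra A (FrobAlg B p) :=
  Algebra.compHom _ (algebraMap A B)

attribute [local instance] algebraBase

instance : IsScalarTower A B (FrobAlg B p) := .of_algebraMap_eq fun _ => rfl

instance : IsScalarTower A (FrobAlg A p) (FrobAlg B p) :=
  .of_algebraMap_eq fun a => (map_pow (algebraMap A B) a p).symm

noncomputable def relFrobenius : FrobAlg A p ⊗[A] B →ₐ[FrobAlg A p] FrobAlg B p :=
  Algebra.TensorProduct.lift (Algebra.ofId _ _) (IsScalarTower.toAlgHom A B _)
    fun _ _ => .all _ _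

variable {A B}

lemma relFrobenius_tmul (a : FrobAlg A p) (b : B) :
    relFrobenius p A B (a ⊗ₜ b) = mk B p (algebraMap A B (out A p a) * b ^ p) := rfl

lemma one_tmul_relFrobenius (z : FrobAlg A p ⊗[A] B) :
    (1 : FrobAlg A p) ⊗ₜ[A] out B p (relFrobenius p A B z) = z ^ p := by
  rcases subsingleton_or_nontrivial (FrobAlg A p ⊗[A] B) with _ | _
  · exact Subsingleton.elim _ _
  have := CharP.of_ringHom_of_nontrivial
    (Algebra.TensorProduct.includeRight (R := A) (A := FrobAlg A p) (B := B)).toRingHom p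
  induction z using TensorProduct.induction_on with
  | zero => rw [map_zero, zero_pow (Fact.out : p.Prime).ne_zero]; exact TensorProduct.tmul_zero _ _
  | tmul a b =>
    change (1 : FrobAlg A p) ⊗ₜ[A] (algebraMap A B (out A p a) * b ^ p) = _
    -- `A` acts on `FrobAlg A p` through Frobenius, so `out a • 1 = a ^ p`
    rw [Algebra.TensorProduct.tmul_pow, ← Algebra.smul_def, ← TensorProduct.smul_tmul,
      Algebra.smul_def, mul_one]
    rfl
  | add x y hx hy => rw [map_add, add_pow_char, ← hx, ← hy, ← TensorProduct.tmul_add]; rfl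

lemma ker_relFrobenius_le_nilradical :
    RingHom.ker (relFrobenius p A B) ≤ nilradical (FrobAlg A p ⊗[A] B) := fun z hz => by
  refine mem_nilradical.mpr ⟨p, ?_⟩
  rw [← one_tmul_relFrobenius, show relFrobenius p A B z = 0 from hz]
  exact TensorProduct.tmul_zero _ _

lemma surjective_relFrobenius [Algebra.FormallyUnramified A B] [Module.Finite A B] :
    Function.Surjective (relFrobenius p A B) :=
  AlgHom.surjective_of_pow_mem_range p _ fun b => ⟨1 ⊗ₜ out B p b,
    (relFrobenius_tmul p 1 _).trans (by rw [show out A p 1 = 1 from rfl, map_one, one_mul]; rfl)⟩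

theorem bijective_relFrobenius [Algebra.Etale A B] [Module.Finite A B] :
    Function.Bijective (relFrobenius p A B) :=
  AlgHom.bijective_of_surjective_of_ker_le_nilradical _ (surjective_relFrobenius p)
    (ker_relFrobenius_le_nilradical p)

noncomputable def relFrobeniusEquiv [Algebra.Etale A B] [Module.Finite A B] :
    B ⊗[A] FrobAlg A p ≃ₗ[B] FrobAlg B p :=
  let φ : B ⊗[A] FrobAlg A p →ₐ[B] FrobAlg B p :=
    Algebra.TensorProduct.lift (Algebra.ofId _ _) (IsScalarTower.toAlgHom A _ _)
      fun _ _ => .all _ _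
  have hφ : ⇑φ = relFrobenius p A B ∘ Algebra.TensorProduct.comm A B (FrobAlg A p) :=
    congrArg DFunLike.coe (Algebra.TensorProduct.ext' (g := φ.restrictScalars A)
      (h := (relFrobenius p A B).restrictScalars A |>.comp
        (Algebra.TensorProduct.comm A B (FrobAlg A p)).toAlgHom)
      fun _ _ => mul_comm _ _)
  LinearEquiv.ofBijective φ.toLinearMap <| by
    rw [AlgHom.coe_toLinearMap, hφ]
    exact (bijective_relFrobenius p).comp (Algebra.TensorProduct.comm A B (FrobAlg A p)).bijective

lemma relFrobeniusEquiv_tmul [Algebra.Etale A B] [Module.Finite A B] (b : B) (a : FrobAlg A p) :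
    relFrobeniusEquiv p (b ⊗ₜ a) = mk B p (b ^ p * algebraMap A B (out A p a)) := rfl

end RelativeFrobenius

end FrobAlg

theorem stmt_6.{u} (p : ℕ) [Fact p.Prime] (k : Type*) [Field k] [CharP k p]
    [PerfectRing k p] (A B : Type u) [CommRing A] [CommRing B] [CharP A p] [CharP B p]
    [Algebra k A] [Algebra A B] [Algebra.Etale A B] [Module.Finite A B]
    (N : Type*) [AddCommGroup N] [Module B N] [Module A N] [IsScalarTower A B N]
    [Module.FinitePresentation B N]
    (θ : (N ⊗[A] FrobAlg A p) →+ (N ⊗[B] FrobAlg B p))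
    (hθ : ∀ (n : N) (a : FrobAlg A p),
      θ (n ⊗ₜ[A] a) = n ⊗ₜ[B] FrobAlg.mk B p (algebraMap A B (FrobAlg.out A p a))) :
    Function.Bijective θ := by
  let e : N ⊗[A] FrobAlg A p ≃ₗ[B] N ⊗[B] FrobAlg B p :=
    (AlgebraTensorModule.cancelBaseChange A B B N (FrobAlg A p)).symm ≪≫ₗ
      TensorProduct.congr (LinearEquiv.refl B N) (FrobAlg.relFrobeniusEquiv p)
  have hθe : ⇑θ = e := funext fun x => by
    induction x using TensorProduct.induction_on with
    | zero => simp
    | tmul n a => simp [e, hθ, FrobAlg.relFrobeniusEquiv_tmul]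
    | add x y hx hy => simp [hx, hy]
  exact hθe ▸ e.bijective
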